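/- arXiv:1301.0450 — 8 statements merged into one kernel-verified Lean document; each statement's English description precedes it below -/
import Mathlib

section
/- Let P = (v_1, …, v_ℓ) be a longest properly colored path in an edge-colored complete graph K_n^c. Then every vertex u with c(v_1, u) ≠ c(v_1, v_2) lies on P; in particular, if Δ^mon(K_n^c) < ⌊n/2⌋, then ℓ ≥ ⌈n/2⌉ + 1. -/
open Finset

/-- A properly colored cycle of length `L ≥ 3` in the edge-colored complete graph on
`Fin n` with coloring `c`, given by its vertex sequence `w 0, w 1, …, w (L-1)`. -/
def IsPCCycle (n : ℕ) (c : Fin n → Fin n → ℕ) (L : ℕ) (w : ℕ → Fin n) : Prop :=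
  3 ≤ L ∧ (∀ i j, i < L → j < L → w i = w j → i = j) ∧
    ∀ i < L, c (w i) (w ((i + 1) % L)) ≠ c (w ((i + 1) % L)) (w ((i + 2) % L))

/-- A properly colored path with `ℓ` vertices `v 1, v 2, …, v ℓ` (1-based indexing). -/
def IsPCPath (n : ℕ) (c : Fin n → Fin n → ℕ) (ℓ : ℕ) (v : ℕ → Fin n) : Prop :=
  (∀ i j, 1 ≤ i → i ≤ ℓ → 1 ≤ j → j ≤ ℓ → v i = v j → i = j) ∧
    ∀ i, 1 ≤ i → i + 2 ≤ ℓ → c (v i) (v (i + 1)) ≠ c (v (i + 1)) (v (i + 2))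

/-- `Δ^mon(K_n^c) < k`: every vertex is incident with fewer than `k`
edges of any single color. -/
def MaxMonDegLT (n : ℕ) (c : Fin n → Fin n → ℕ) (k : ℕ) : Prop :=
  ∀ v : Fin n, ∀ col : ℕ,
    ((Finset.univ.filter (fun u => u ≠ v ∧ c v u = col)).card) < k

/-- If `P = (v 1, …, v ℓ)` is a longest properly colored path in `K_n^c`, then every
vertex `u` with `c (v 1) u ≠ c (v 1) (v 2)` lies on `P`; in particular, if
`Δ^mon(K_n^c) < ⌊n/2⌋`, then `ℓ ≥ ⌈n/2⌉ + 1`. -/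
theorem longest_path_contains_color_nbrs (n : ℕ) (c : Fin n → Fin n → ℕ)
    (hsym : ∀ u v, c u v = c v u) (hmon : MaxMonDegLT n c (n / 2))
    (ℓ : ℕ) (v : ℕ → Fin n) (hℓ : 2 ≤ ℓ) (hP : IsPCPath n c ℓ v)
    (hlong : ∀ ℓ' v', IsPCPath n c ℓ' v' → ℓ' ≤ ℓ) :
    (∀ u : Fin n, c (v 1) u ≠ c (v 1) (v 2) →
        ∃ i, 1 ≤ i ∧ i ≤ ℓ ∧ v i = u) ∧
      (n + 1) / 2 + 1 ≤ ℓ := by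
  obtain ⟨hinj, hprop⟩ := hP
  have part1 : ∀ u : Fin n, c (v 1) u ≠ c (v 1) (v 2) →
      ∃ i, 1 ≤ i ∧ i ≤ ℓ ∧ v i = u := by
    intro u hu
    by_contra h
    push_neg at h
    set v' : ℕ → Fin n := fun k => if k = 1 then u else v (k - 1) with hv'
    have hv'1 : v' 1 = u := by simp [hv']
    have hv'k : ∀ k, 2 ≤ k → v' k = v (k - 1) := by
      intro k hk
      simp only [hv']
      rw [if_neg (by omega)]
    have hP' : IsPCPath n c (ℓ + 1) v' := by
      constructor
      · intro i j hi1 hiℓ hj1 hjℓ hij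
        rcases Nat.lt_or_ge i 2 with hi | hi
        · rcases Nat.lt_or_ge j 2 with hj | hj
          · omega
          · exfalso
            have hieq : i = 1 := by omega
            rw [hieq, hv'1, hv'k j hj] at hij
            exact h (j - 1) (by omega) (by omega) hij.symm
        · rcases Nat.lt_or_ge j 2 with hj | hj
          · exfalso
            have hjeq : j = 1 := by omega
            rw [hjeq, hv'1, hv'k i hi] at hij
            exact h (i - 1) (by omega) (by omega) hij
          · rw [hv'k i hi, hv'k j hj] at hij
            have := hinj (i - 1) (j - 1) (by omega) (by omega) (by omega) (by omega) hij
            omega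
      · intro i hi1 hi2
        rcases Nat.lt_or_ge i 2 with hi | hi
        · have hieq : i = 1 := by omega
          rw [hieq, hv'1, hv'k 2 (by omega), hv'k 3 (by omega)]
          norm_num
          rw [hsym]
          exact hu
        · rw [hv'k i (by omega), hv'k (i + 1) (by omega), hv'k (i + 2) (by omega)]
          have e1 : i + 1 - 1 = (i - 1) + 1 := by omega
          have e2 : i + 2 - 1 = (i - 1) + 2 := by omega
          rw [e1, e2]
          exact hprop (i - 1) (by omega) (by omega)
    have := hlong (ℓ + 1) v' hP'
    omega
  refine ⟨part1, ?_⟩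
  set col := c (v 1) (v 2) with hcol
  set N : Finset (Fin n) := univ.filter (fun u => u ≠ v 1 ∧ c (v 1) u ≠ col) with hN
  set S : Finset (Fin n) := univ.filter (fun u => u ≠ v 1 ∧ c (v 1) u = col) with hS
  have hScard : S.card < n / 2 := hmon (v 1) col
  have hsum : N.card + S.card = n - 1 := by
    have hdisj : Disjoint N S := by
      rw [Finset.disjoint_left]
      intro a ha haS
      rw [hN, Finset.mem_filter] at ha
      rw [hS, Finset.mem_filter] at haS
      exact ha.2.2 haS.2.2
    have hunion : N ∪ S = univ.filter (fun u => u ≠ v 1) := by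
      ext a
      simp only [hN, hS, Finset.mem_union, Finset.mem_filter, Finset.mem_univ, true_and]
      tauto
    have hcard : (univ.filter (fun u : Fin n => u ≠ v 1)).card = n - 1 := by
      rw [Finset.filter_ne']
      rw [Finset.card_erase_of_mem (Finset.mem_univ _)]
      simp
    rw [← Finset.card_union_of_disjoint hdisj, hunion, hcard]
  have hsub : insert (v 1) N ⊆ (Finset.Icc 1 ℓ).image v := by
    intro a ha
    rw [Finset.mem_insert] at ha
    rcases ha with ha | ha
    · exact Finset.mem_image.mpr ⟨1, Finset.mem_Icc.mpr ⟨le_refl 1, by omega⟩, ha.symm⟩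
    · rw [hN, Finset.mem_filter] at ha
      obtain ⟨i, hi1, hiℓ, hvi⟩ := part1 a ha.2.2
      exact Finset.mem_image.mpr ⟨i, Finset.mem_Icc.mpr ⟨hi1, hiℓ⟩, hvi⟩
  have hins : (insert (v 1) N).card = N.card + 1 := by
    rw [Finset.card_insert_of_notMem]
    simp [hN]
  have hle : (insert (v 1) N).card ≤ ℓ := by
    calc (insert (v 1) N).card ≤ ((Finset.Icc 1 ℓ).image v).card := Finset.card_le_card hsub
      _ ≤ (Finset.Icc 1 ℓ).card := Finset.card_image_le
      _ = ℓ := by rw [Nat.card_Icc]; omega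
  have hn1 : 1 ≤ n := (v 1).2.trans_le (le_refl n) |>.le.trans (le_refl n) |> fun _ => Nat.pos_of_ne_zero (by intro h0; exact absurd (v 1).2 (by omega))
  omega
end

section
/- Suppose Δ^mon(K_n^c) < ⌊n/2⌋ and every properly colored cycle in K_n^c has length at most ⌈n/2⌉ + 1. Let P = (1, 2, …, ℓ) be a longest properly colored path. Then either c(1, ℓ) = c(1, 2) or c(ℓ, 1) = c(ℓ−1, ℓ); consequently ℓ ≥ ⌈n/2⌉ + 3. -/
open Finset

lemma two_le_len (n : ℕ) (hn : 6 ≤ n) (c : Fin n → Fin n → ℕ) (ℓ : ℕ)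
    (hlong : ∀ ℓ' v', IsPCPath n c ℓ' v' → ℓ' ≤ ℓ) : 2 ≤ ℓ := by
  have h01 : (⟨0, by omega⟩ : Fin n) ≠ ⟨1, by omega⟩ := by simp [Fin.ext_iff]
  refine hlong 2 (fun i => if i ≤ 1 then ⟨0, by omega⟩ else ⟨1, by omega⟩) ⟨?_, ?_⟩
  · intro i j hi1 hi2 hj1 hj2 h
    interval_cases i <;> interval_cases j <;> simp_all [Fin.ext_iff]
  · intro i hi hi2; omega

lemma extend_left (n : ℕ) (c : Fin n → Fin n → ℕ)
    (hsym : ∀ u v, c u v = c v u)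
    (ℓ : ℕ) (v : ℕ → Fin n) (hP : IsPCPath n c ℓ v)
    (hlong : ∀ ℓ' v', IsPCPath n c ℓ' v' → ℓ' ≤ ℓ)
    (u : Fin n) (hc : c (v 1) u ≠ c (v 1) (v 2)) :
    ∃ j, 1 ≤ j ∧ j ≤ ℓ ∧ u = v j := by
  by_contra h
  push_neg at h
  have key : IsPCPath n c (ℓ + 1) (fun i => if i = 1 then u else v (i - 1)) := by
    constructor
    · intro i j hi1 hiL hj1 hjL heq
      simp only at heq
      by_cases hi : i = 1 <;> by_cases hj : j = 1
      · omega
      · rw [if_pos hi, if_neg hj] at heq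
        exact absurd heq (h (j - 1) (by omega) (by omega))
      · rw [if_neg hi, if_pos hj] at heq
        exact absurd heq.symm (h (i - 1) (by omega) (by omega))
      · rw [if_neg hi, if_neg hj] at heq
        have := hP.1 (i - 1) (j - 1) (by omega) (by omega) (by omega) (by omega) heq
        omega
    · intro i hi1 hi2
      rcases Nat.lt_or_ge i 2 with hi | hi
      · have hieq : i = 1 := by omega
        subst hieq
        simp only [if_pos rfl, if_neg (by omega : ¬ (1 + 1 : ℕ) = 1),
          if_neg (by omega : ¬ (1 + 2 : ℕ) = 1)]
        show c u (v 1) ≠ c (v 1) (v 2)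
        rw [hsym]
        exact hc
      · obtain ⟨k, rfl⟩ : ∃ k, i = k + 2 := ⟨i - 2, by omega⟩
        simp only [if_neg (by omega : ¬ (k + 2 : ℕ) = 1),
          if_neg (by omega : ¬ (k + 2 + 1 : ℕ) = 1),
          if_neg (by omega : ¬ (k + 2 + 2 : ℕ) = 1)]
        show c (v (k + 1)) (v (k + 2)) ≠ c (v (k + 2)) (v (k + 3))
        exact hP.2 (k + 1) (by omega) (by omega)
  have := hlong _ _ key
  omega

lemma count_bound (n : ℕ) (hn : 6 ≤ n) (c : Fin n → Fin n → ℕ)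
    (hmon : MaxMonDegLT n c (n / 2)) (v : ℕ → Fin n) (m : ℕ)
    (hsub : ∀ u : Fin n, u ≠ v 1 → c (v 1) u ≠ c (v 1) (v 2) →
      ∃ j, 3 ≤ j ∧ j ≤ m ∧ u = v j) :
    (n + 1) / 2 + 2 ≤ m := by
  classical
  set col := c (v 1) (v 2) with hcol
  set S := univ.filter (fun u : Fin n => u ≠ v 1 ∧ c (v 1) u ≠ col) with hS
  set T := univ.filter (fun u : Fin n => u ≠ v 1 ∧ c (v 1) u = col) with hT
  have hTcard : T.card < n / 2 := hmon (v 1) col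
  have hdisj : Disjoint S T := by
    rw [Finset.disjoint_left]
    intro a ha hb
    simp only [hS, hT, Finset.mem_filter, Finset.mem_univ, true_and] at ha hb
    exact ha.2 hb.2
  have hunion : S ∪ T = univ.erase (v 1) := by
    ext u
    simp only [hS, hT, Finset.mem_union, Finset.mem_filter, Finset.mem_univ, true_and,
      Finset.mem_erase]
    tauto
  have hcard : S.card + T.card = n - 1 := by
    rw [← Finset.card_union_of_disjoint hdisj, hunion,
      Finset.card_erase_of_mem (Finset.mem_univ _), Finset.card_univ, Fintype.card_fin]
  have hSsub : S ⊆ (Finset.Icc 3 m).image v := by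
    intro u hu
    simp only [hS, Finset.mem_filter, Finset.mem_univ, true_and] at hu
    obtain ⟨j, hj3, hjm, rfl⟩ := hsub u hu.1 hu.2
    exact Finset.mem_image.2 ⟨j, Finset.mem_Icc.2 ⟨hj3, hjm⟩, rfl⟩
  have hSle : S.card ≤ m + 1 - 3 := by
    calc S.card ≤ ((Finset.Icc 3 m).image v).card := Finset.card_le_card hSsub
      _ ≤ (Finset.Icc 3 m).card := Finset.card_image_le
      _ = m + 1 - 3 := Nat.card_Icc 3 m
  omega

lemma chord_bound (n : ℕ) (hn : 6 ≤ n) (c : Fin n → Fin n → ℕ)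
    (hsym : ∀ u v, c u v = c v u) (hmon : MaxMonDegLT n c (n / 2))
    (ℓ : ℕ) (v : ℕ → Fin n) (hP : IsPCPath n c ℓ v)
    (hlong : ∀ ℓ' v', IsPCPath n c ℓ' v' → ℓ' ≤ ℓ)
    (h2 : 2 ≤ ℓ)
    (hch : c (v 1) (v ℓ) = c (v 1) (v 2)) :
    (n + 1) / 2 + 3 ≤ ℓ := by
  have hb : (n + 1) / 2 + 2 ≤ ℓ - 1 := by
    apply count_bound n hn c hmon v (ℓ - 1)
    intro u hu1 hc
    obtain ⟨j, hj1, hjl, rfl⟩ := extend_left n c hsym ℓ v hP hlong u hc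
    have e1 : j ≠ 1 := fun h => hu1 (by rw [h])
    have e2 : j ≠ 2 := fun h => hc (by rw [h])
    have e3 : j ≠ ℓ := fun h => hc (by rw [h]; exact hch)
    exact ⟨j, by omega, by omega, rfl⟩
  omega

lemma reverse_path (n : ℕ) (c : Fin n → Fin n → ℕ) (hsym : ∀ u v, c u v = c v u)
    (ℓ : ℕ) (v : ℕ → Fin n) (hP : IsPCPath n c ℓ v) :
    IsPCPath n c ℓ (fun i => v (ℓ + 1 - i)) := by
  constructor
  · intro i j hi1 hiℓ hj1 hjℓ heq
    have := hP.1 (ℓ + 1 - i) (ℓ + 1 - j) (by omega) (by omega) (by omega) (by omega) heq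
    omega
  · intro i hi1 hi2
    have e1 : ℓ + 1 - i = (ℓ - i - 1) + 2 := by omega
    have e2 : ℓ + 1 - (i + 1) = (ℓ - i - 1) + 1 := by omega
    have e3 : ℓ + 1 - (i + 2) = ℓ - i - 1 := by omega
    simp only [e1, e2, e3]
    have h := hP.2 (ℓ - i - 1) (by omega) (by omega)
    rw [hsym (v ((ℓ - i - 1) + 2)) (v ((ℓ - i - 1) + 1)),
      hsym (v ((ℓ - i - 1) + 1)) (v (ℓ - i - 1))]
    exact Ne.symm h

/-- Suppose `Δ^mon(K_n^c) < ⌊n/2⌋` and every properly colored cycle has length at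
most `⌈n/2⌉ + 1`. If `(v 1, …, v ℓ)` is a longest properly colored path, then
`c (v 1) (v ℓ) = c (v 1) (v 2)` or `c (v ℓ) (v 1) = c (v (ℓ-1)) (v ℓ)`;
consequently `ℓ ≥ ⌈n/2⌉ + 3`. -/
theorem endpoint_chord_and_length (n : ℕ) (hn : 6 ≤ n) (c : Fin n → Fin n → ℕ)
    (hsym : ∀ u v, c u v = c v u) (hmon : MaxMonDegLT n c (n / 2))
    (hcyc : ∀ L w, IsPCCycle n c L w → L ≤ (n + 1) / 2 + 1)
    (ℓ : ℕ) (v : ℕ → Fin n) (hP : IsPCPath n c ℓ v)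
    (hlong : ∀ ℓ' v', IsPCPath n c ℓ' v' → ℓ' ≤ ℓ) :
    (c (v 1) (v ℓ) = c (v 1) (v 2) ∨ c (v ℓ) (v 1) = c (v (ℓ - 1)) (v ℓ)) ∧
      (n + 1) / 2 + 3 ≤ ℓ := by
  have h2 : 2 ≤ ℓ := two_le_len n hn c ℓ hlong
  have hA : (n + 1) / 2 + 2 ≤ ℓ := by
    apply count_bound n hn c hmon v ℓ
    intro u hu1 hc
    obtain ⟨j, hj1, hjl, rfl⟩ := extend_left n c hsym ℓ v hP hlong u hc
    have e1 : j ≠ 1 := fun h => hu1 (by rw [h])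
    have e2 : j ≠ 2 := fun h => hc (by rw [h])
    exact ⟨j, by omega, hjl, rfl⟩
  have hdisj : c (v 1) (v ℓ) = c (v 1) (v 2) ∨ c (v ℓ) (v 1) = c (v (ℓ - 1)) (v ℓ) := by
    by_contra hcon
    push_neg at hcon
    obtain ⟨hc1, hc2⟩ := hcon
    have hcycle : IsPCCycle n c ℓ (fun i => v (i + 1)) := by
      refine ⟨by omega, ?_, ?_⟩
      · intro i j hi hj heq
        have := hP.1 (i + 1) (j + 1) (by omega) (by omega) (by omega) (by omega) heq
        omega
      · intro i hiℓ
        simp only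
        rcases Nat.lt_or_ge (i + 2) ℓ with hlt | hge
        · rw [Nat.mod_eq_of_lt (by omega), Nat.mod_eq_of_lt hlt]
          exact hP.2 (i + 1) (by omega) (by omega)
        · rcases Nat.eq_or_lt_of_le hge with heq | hgt
          · -- i + 2 = ℓ
            have heq' : i + 2 = ℓ := heq.symm
            rw [Nat.mod_eq_of_lt (by omega : i + 1 < ℓ),
              show (i + 2) % ℓ = 0 by rw [heq', Nat.mod_self]]
            show c (v (i + 1)) (v (i + 2)) ≠ c (v (i + 2)) (v 1)
            rw [← heq'] at hc2
            exact Ne.symm hc2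
          · -- i + 1 = ℓ
            have heq' : i + 1 = ℓ := by omega
            rw [show (i + 1) % ℓ = 0 by rw [heq', Nat.mod_self],
              show (i + 2) % ℓ = 1 by
                rw [show i + 2 = ℓ + 1 by omega, Nat.add_mod_left, Nat.mod_eq_of_lt (by omega)]]
            show c (v (i + 1)) (v (0 + 1)) ≠ c (v (0 + 1)) (v (1 + 1))
            rw [heq']
            show c (v ℓ) (v 1) ≠ c (v 1) (v 2)
            rw [hsym (v ℓ) (v 1)]
            exact hc1
    have := hcyc ℓ _ hcycle
    omega
  refine ⟨hdisj, ?_⟩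
  rcases hdisj with hch | hch
  · exact chord_bound n hn c hsym hmon ℓ v hP hlong h2 hch
  · have hrev := reverse_path n c hsym ℓ v hP
    have hch' : c ((fun i => v (ℓ + 1 - i)) 1) ((fun i => v (ℓ + 1 - i)) ℓ)
        = c ((fun i => v (ℓ + 1 - i)) 1) ((fun i => v (ℓ + 1 - i)) 2) := by
      simp only
      rw [show ℓ + 1 - 1 = ℓ by omega, show ℓ + 1 - ℓ = 1 by omega,
        show ℓ + 1 - 2 = ℓ - 1 by omega]
      rw [hch]
      exact hsym _ _
    exact chord_bound n hn c hsym hmon ℓ _ hrev hlong h2 hch'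
end

section
/- Suppose Δ^mon(K_n^c) < ⌊n/2⌋, every properly colored cycle has length at most ⌈n/2⌉ + 1, and P = (1, …, ℓ) is a longest properly colored path. Let Y = {y : c(y, ℓ) ≠ c(ℓ−1, ℓ)} ∩ [1, ℓ−1] and let y_1 = min Y. Then c(ℓ, y_1) = c(y_1, y_1 + 1). -/
open Finset

/-- Under the standing assumptions, if `y₁` is the least index in
`Y = {y ∈ [1, ℓ-1] : c (v y) (v ℓ) ≠ c (v (ℓ-1)) (v ℓ)}`, then
`c (v ℓ) (v y₁) = c (v y₁) (v (y₁ + 1))`. -/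
theorem first_Y_vertex_color (n : ℕ) (hn : 6 ≤ n) (c : Fin n → Fin n → ℕ)
    (hsym : ∀ u v, c u v = c v u) (hmon : MaxMonDegLT n c (n / 2))
    (hcyc : ∀ L w, IsPCCycle n c L w → L ≤ (n + 1) / 2 + 1)
    (ℓ : ℕ) (v : ℕ → Fin n) (hP : IsPCPath n c ℓ v)
    (hlong : ∀ ℓ' v', IsPCPath n c ℓ' v' → ℓ' ≤ ℓ)
    (y₁ : ℕ) (hy1 : 1 ≤ y₁) (hy1ℓ : y₁ ≤ ℓ - 1)
    (hy1Y : c (v y₁) (v ℓ) ≠ c (v (ℓ - 1)) (v ℓ))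
    (hy1min : ∀ y, 1 ≤ y → y < y₁ → c (v y) (v ℓ) = c (v (ℓ - 1)) (v ℓ)) :
    c (v ℓ) (v y₁) = c (v y₁) (v (y₁ + 1)) := by
  by_contra hne
  obtain ⟨hinj, hprop⟩ := hP
  have hl2 : 2 ≤ ℓ := by omega
  -- ℓ ≤ n
  have hln : ℓ ≤ n := by
    have h := Finset.card_le_card_of_injOn (s := Finset.Icc 1 ℓ)
      (t := (Finset.univ : Finset (Fin n))) v
      (fun a _ => Finset.mem_univ _)
      (by
        intro a ha b hb hab
        simp only [Finset.mem_coe, Finset.mem_Icc] at ha hb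
        exact hinj a b ha.1 ha.2 hb.1 hb.2 hab)
    simpa using h
  -- off-path vertices
  have offpath : ∀ u : Fin n, (∀ i, 1 ≤ i → i ≤ ℓ → v i ≠ u) →
      c (v ℓ) u = c (v (ℓ - 1)) (v ℓ) := by
    intro u hu
    by_contra h
    set v' : ℕ → Fin n := fun i => if i ≤ ℓ then v i else u with hv'def
    have hv' : ∀ i, i ≤ ℓ → v' i = v i := by intro i hi; simp [hv'def, hi]
    have hv'ℓ : v' (ℓ + 1) = u := by simp [hv'def]
    have hpath : IsPCPath n c (ℓ + 1) v' := by
      constructor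
      · intro i j hi hiℓ hj hjℓ heq
        rcases Nat.lt_or_ge i (ℓ + 1) with hi' | hi'
        · rcases Nat.lt_or_ge j (ℓ + 1) with hj' | hj'
          · rw [hv' i (by omega), hv' j (by omega)] at heq
            exact hinj i j hi (by omega) hj (by omega) heq
          · have hj'' : j = ℓ + 1 := by omega
            rw [hv' i (by omega), hj'', hv'ℓ] at heq
            exact absurd heq (hu i hi (by omega))
        · have hi'' : i = ℓ + 1 := by omega
          rcases Nat.lt_or_ge j (ℓ + 1) with hj' | hj'
          · rw [hv' j (by omega), hi'', hv'ℓ] at heq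
            exact absurd heq.symm (hu j hj (by omega))
          · omega
      · intro i hi1 hi2
        rcases Nat.lt_or_ge (i + 2) (ℓ + 1) with h2 | h2
        · rw [hv' i (by omega), hv' (i + 1) (by omega), hv' (i + 2) (by omega)]
          exact hprop i hi1 (by omega)
        · have hieq : i = ℓ - 1 := by omega
          have h1 : i + 1 = ℓ := by omega
          have h2' : i + 2 = ℓ + 1 := by omega
          have e1 : ℓ - 1 + 1 = ℓ := by omega
          have e2 : ℓ - 1 + 2 = ℓ + 1 := by omega
          rw [hieq, e1, e2, hv' (ℓ - 1) (by omega), hv' ℓ le_rfl, hv'ℓ]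
          exact fun hc => h hc.symm
    have := hlong (ℓ + 1) v' hpath
    omega
  -- degree counting at v ℓ with color c (v (ℓ-1)) (v ℓ)
  set col := c (v (ℓ - 1)) (v ℓ) with hcol
  set T : Finset (Fin n) :=
    Finset.univ.filter (fun u => u ≠ v ℓ ∧ c (v ℓ) u = col) with hT
  have hTcard : T.card < n / 2 := hmon (v ℓ) col
  set B : Finset (Fin n) := (Finset.Icc 1 (y₁ - 1) ∪ {ℓ - 1}).image v with hB
  set O : Finset (Fin n) := Finset.univ \ (Finset.Icc 1 ℓ).image v with hO
  have hBsub : B ⊆ T := by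
    intro u hu
    simp only [hB, Finset.mem_image, Finset.mem_union, Finset.mem_Icc,
      Finset.mem_singleton] at hu
    obtain ⟨k, hk, rfl⟩ := hu
    have hk1 : 1 ≤ k := by rcases hk with h | h <;> omega
    have hkℓ : k < ℓ := by rcases hk with h | h <;> omega
    have hne' : v k ≠ v ℓ := fun h =>
      absurd (hinj k ℓ hk1 (by omega) (by omega) le_rfl h) (by omega)
    have hcolk : c (v ℓ) (v k) = col := by
      rcases hk with h | h
      · rw [hsym]; exact hy1min k h.1 (by omega)
      · rw [h, hsym]
    simp [hT, hne', hcolk]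
  have hOsub : O ⊆ T := by
    intro u hu
    simp only [hO, Finset.mem_sdiff, Finset.mem_univ, true_and,
      Finset.mem_image, Finset.mem_Icc, not_exists, not_and] at hu
    have hu' : ∀ i, 1 ≤ i → i ≤ ℓ → v i ≠ u := by
      intro i h1 h2; exact hu i ⟨h1, h2⟩
    have hne' : u ≠ v ℓ := fun h => (hu' ℓ (by omega) le_rfl h.symm)
    simp [hT, hne', offpath u hu']
  have hdisj : Disjoint B O := by
    refine Finset.disjoint_left.mpr ?_
    intro u hu hu'
    simp only [hB, Finset.mem_image, Finset.mem_union, Finset.mem_Icc,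
      Finset.mem_singleton] at hu
    obtain ⟨k, hk, rfl⟩ := hu
    simp only [hO, Finset.mem_sdiff, Finset.mem_univ, true_and,
      Finset.mem_image, Finset.mem_Icc, not_exists, not_and] at hu'
    exact hu' k (by rcases hk with h | h <;> omega) rfl
  have hBcard : B.card = y₁ := by
    rw [hB, Finset.card_image_of_injOn]
    · rw [Finset.card_union_of_disjoint]
      · simp; omega
      · simp only [Finset.disjoint_singleton_right, Finset.mem_Icc]
        omega
    · intro a ha b hb hab
      simp only [Finset.coe_union, Set.mem_union, Finset.coe_Icc, Set.mem_Icc,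
        Finset.coe_singleton, Set.mem_singleton_iff] at ha hb
      have ha1 : 1 ≤ a := by rcases ha with h | h <;> omega
      have ha2 : a ≤ ℓ := by rcases ha with h | h <;> omega
      have hb1 : 1 ≤ b := by rcases hb with h | h <;> omega
      have hb2 : b ≤ ℓ := by rcases hb with h | h <;> omega
      exact hinj a b ha1 ha2 hb1 hb2 hab
  have hOcard : O.card = n - ℓ := by
    rw [hO, Finset.card_sdiff_of_subset (by intro u _; exact Finset.mem_univ u)]
    rw [Finset.card_image_of_injOn]
    · simp
    · intro a ha b hb hab
      simp only [Finset.coe_Icc, Set.mem_Icc] at ha hb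
      exact hinj a b ha.1 ha.2 hb.1 hb.2 hab
  have hcount : y₁ + (n - ℓ) < n / 2 := by
    have h1 : (B ∪ O).card ≤ T.card :=
      Finset.card_le_card (Finset.union_subset hBsub hOsub)
    rw [Finset.card_union_of_disjoint hdisj, hBcard, hOcard] at h1
    omega
  -- hence ℓ - y₁ is large; build the cycle
  set L := ℓ - y₁ + 1 with hL
  have hL3 : 3 ≤ L := by omega
  set w : ℕ → Fin n := fun i => v (y₁ + i % L) with hw
  have key : ∀ j, j < L → w j = v (y₁ + j) := by
    intro j hj; simp [hw, Nat.mod_eq_of_lt hj]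
  have hcycle : IsPCCycle n c L w := by
    refine ⟨hL3, ?_, ?_⟩
    · intro i j hi hj heq
      rw [key i hi, key j hj] at heq
      have := hinj (y₁ + i) (y₁ + j) (by omega) (by omega) (by omega) (by omega) heq
      omega
    · intro i hi
      have hm1 : (i + 1) % L < L := Nat.mod_lt _ (by omega)
      have hm2 : (i + 2) % L < L := Nat.mod_lt _ (by omega)
      rw [key i hi, key _ hm1, key _ hm2]
      rcases Nat.lt_or_ge (i + 2) L with h2 | h2
      · rw [Nat.mod_eq_of_lt (by omega : i + 1 < L), Nat.mod_eq_of_lt h2]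
        have := hprop (y₁ + i) (by omega) (by omega)
        simpa [Nat.add_assoc] using this
      · rcases Nat.lt_or_ge (i + 1) L with h1 | h1
        · -- i + 2 = L, i + 1 = L - 1
          have e1 : (i + 1) % L = i + 1 := Nat.mod_eq_of_lt h1
          have e2 : (i + 2) % L = 0 := by
            have : i + 2 = L := by omega
            simp [this]
          rw [e1, e2]
          have ha : y₁ + (i + 1) = ℓ := by omega
          have hb : y₁ + i = ℓ - 1 := by omega
          rw [ha, hb, Nat.add_zero]
          intro hc
          exact hy1Y (by rw [hsym]; exact hc.symm)
        · -- i + 1 = L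
          have e1 : (i + 1) % L = 0 := by
            have : i + 1 = L := by omega
            simp [this]
          have e2 : (i + 2) % L = 1 := by
            have : i + 2 = L + 1 := by omega
            rw [this, Nat.add_mod_left, Nat.mod_eq_of_lt (by omega)]
          rw [e1, e2]
          have ha : y₁ + i = ℓ := by omega
          rw [ha, Nat.add_zero]
          exact fun hc => hne hc
  have := hcyc L w hcycle
  omega
end

section
/- Let P = (v_1, …, v_ℓ) be a longest properly colored path in an edge-colored graph G, and let v_m be the first vertex (smallest index m ≥ 2) with c(v_m, v_ℓ) ≠ c(v_{ℓ−1}, v_ℓ). If c(v_ℓ, v_m) ≠ c(v_m, v_{m+1}), then G contains a properly colored cycle of length ℓ − m + 1 passing through every vertex v_j with m ≤ j ≤ ℓ. -/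
open Finset

/-- Let `(v 1, …, v ℓ)` be a longest properly colored path and let `v m` (with
`m ≥ 2` smallest) be the first vertex with `c (v m) (v ℓ) ≠ c (v (ℓ-1)) (v ℓ)`.
If `c (v ℓ) (v m) ≠ c (v m) (v (m+1))`, then there is a properly colored cycle of
length `ℓ - m + 1` through every vertex `v j`, `m ≤ j ≤ ℓ`. -/
theorem rotation_cycle (n : ℕ) (c : Fin n → Fin n → ℕ)
    (hsym : ∀ u v, c u v = c v u)
    (ℓ : ℕ) (v : ℕ → Fin n) (hP : IsPCPath n c ℓ v)
    (hlong : ∀ ℓ' v', IsPCPath n c ℓ' v' → ℓ' ≤ ℓ)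
    (m : ℕ) (hm2 : 2 ≤ m) (hmℓ : m + 2 ≤ ℓ)
    (hmY : c (v m) (v ℓ) ≠ c (v (ℓ - 1)) (v ℓ))
    (hmin : ∀ j, 2 ≤ j → j < m → c (v j) (v ℓ) = c (v (ℓ - 1)) (v ℓ))
    (hchord : c (v ℓ) (v m) ≠ c (v m) (v (m + 1))) :
    ∃ w : ℕ → Fin n, IsPCCycle n c (ℓ - m + 1) w ∧
      ∀ j, m ≤ j → j ≤ ℓ → ∃ k < ℓ - m + 1, w k = v j := by
  refine ⟨fun k => v (m + k), ⟨by omega, ?_, ?_⟩, ?_⟩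
  · intro i j hi hj hij
    have := hP.1 (m + i) (m + j) (by omega) (by omega) (by omega) (by omega) hij
    omega
  · intro i hi
    set L := ℓ - m + 1 with hLdef
    by_cases h1 : i + 2 < L
    · rw [Nat.mod_eq_of_lt (by omega), Nat.mod_eq_of_lt h1]
      show c (v (m + i)) (v (m + (i + 1))) ≠ c (v (m + (i + 1))) (v (m + (i + 2)))
      have e1 : m + (i + 1) = m + i + 1 := by omega
      have e2 : m + (i + 2) = m + i + 2 := by omega
      rw [e1, e2]
      exact hP.2 (m + i) (by omega) (by omega)
    · by_cases h2 : i + 1 < L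
      · have e1 : (i + 1) % L = i + 1 := Nat.mod_eq_of_lt h2
        have e2 : (i + 2) % L = 0 := by
          have h : i + 2 = L := by omega
          simp [h]
        rw [e1, e2]
        show c (v (m + i)) (v (m + (i + 1))) ≠ c (v (m + (i + 1))) (v (m + 0))
        have hme : m + (i + 1) = ℓ := by omega
        have hm1 : m + i = ℓ - 1 := by omega
        rw [hme, hm1, Nat.add_zero, hsym (v ℓ) (v m)]
        exact Ne.symm hmY
      · have e1 : (i + 1) % L = 0 := by
          have h : i + 1 = L := by omega
          simp [h]
        have e2 : (i + 2) % L = 1 := by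
          have h : i + 2 = L + 1 := by omega
          rw [h, Nat.add_mod_left, Nat.mod_eq_of_lt (by omega)]
        rw [e1, e2]
        show c (v (m + i)) (v (m + 0)) ≠ c (v (m + 0)) (v (m + 1))
        have hme : m + i = ℓ := by omega
        rw [hme, Nat.add_zero]
        exact hchord
  · intro j hj1 hj2
    refine ⟨j - m, by omega, ?_⟩
    show v (m + (j - m)) = v j
    congr 1
    omega
end

section
/- Suppose Δ^mon(K_n^c) < ⌊n/2⌋, every properly colored cycle in K_n^c has length at most ⌈n/2⌉ + 1, and P = (1, …, ℓ) is a longest properly colored path with sets X = {x : c(1,x) ≠ c(1,2)}, Y = {y : c(y,ℓ) ≠ c(ℓ−1,ℓ)}, x_p = max X, and y_s the largest element of Y such that c(ℓ, y_i) = c(y_i, y_i+1) for all y_i ∈ Y with y_i ≤ y_s. Then y_s ≤ x_p − 3. -/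
open Finset

/-!
Suppose `ys ≥ xp - 2` and write `m = ⌈n/2⌉`. A vertex joined to `v 1` in a color other than
`c (v 1) (v 2)` lies on the longest path `P`, since otherwise it extends `P`; the monochromatic
degree bound gives at least `m` such vertices, so `xp ≥ m + 2`, and in the same way `|Y| ≥ m`.
The cycle `v 1, …, v xp` is too long to be properly colored, which forces
`c (v (xp-1)) (v xp) = c (v xp) (v 1)`. Taking `y ∈ Y` with `y ≤ ys`, `y < xp` and `y` as large
as possible, the cycle `v 1, …, v y, v ℓ, v (ℓ-1), …, v xp` is then properly colored and has
more than `m + 1` vertices.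
-/

variable {n : ℕ} {c : Fin n → Fin n → ℕ}

lemma MaxMonDegLT.sub_le_card {k : ℕ} (hmon : MaxMonDegLT n c k) {u : Fin n} {col : ℕ}
    {I : Finset ℕ} {v : ℕ → Fin n} (hI : ∀ w, w ≠ u → c u w ≠ col → ∃ i ∈ I, v i = w) :
    n - k ≤ #I := by
  have hsplit : (univ.filter fun w => w ≠ u) ⊆
      (univ.filter fun w => w ≠ u ∧ c u w ≠ col) ∪ univ.filter fun w => w ≠ u ∧ c u w = col := by
    intro w
    simp only [mem_filter, mem_univ, true_and, mem_union]
    tauto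
  have hall : #(univ.filter fun w => w ≠ u) = n - 1 := by
    rw [filter_ne', card_erase_of_mem (mem_univ u), card_univ, Fintype.card_fin]
  have hsurj : #(univ.filter fun w => w ≠ u ∧ c u w ≠ col) ≤ #I :=
    card_le_card_of_surjOn v fun w hw => by
      simp only [coe_filter, mem_univ, true_and, Set.mem_ofPred_eq] at hw
      obtain ⟨i, hi, rfl⟩ := hI w hw.1 hw.2
      exact ⟨i, hi, rfl⟩
  have := card_le_card hsplit
  have := card_union_le (univ.filter fun w => w ≠ u ∧ c u w ≠ col)
    (univ.filter fun w => w ≠ u ∧ c u w = col)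
  have := hmon u col
  omega

lemma Finset.exists_mem_Ico_of_subset_Ico {s : Finset ℕ} {p q a b : ℕ} (hs : s ⊆ Ico p q)
    (hcard : (a - p) + (q - b) < #s) : ∃ x ∈ s, a ≤ x ∧ x < b := by
  by_contra! h
  have hsub : s ⊆ Ico p a ∪ Ico b q := fun x hx => by
    have := mem_Ico.1 (hs hx)
    have := h x hx
    simp only [mem_union, mem_Ico]
    omega
  have := (card_le_card hsub).trans (card_union_le _ _)
  simp only [Nat.card_Ico] at this
  omega

lemma isPCPath_one (u : Fin n) : IsPCPath n c 1 (fun _ => u) :=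
  ⟨fun i j _ hi _ hj _ => by omega, fun i hi hi' => by omega⟩

namespace IsPCPath

variable {ℓ : ℕ} {v : ℕ → Fin n}

lemma length_le (hP : IsPCPath n c ℓ v) : ℓ ≤ n := by
  have h := card_le_card_of_injOn v (s := Icc 1 ℓ) (t := univ) (fun _ _ => mem_univ _)
    fun i hi j hj hij => by
      simp only [coe_Icc, Set.mem_Icc] at hi hj
      exact hP.1 i j hi.1 hi.2 hj.1 hj.2 hij
  simpa using h

lemma take (hP : IsPCPath n c ℓ v) {k : ℕ} (hk : k ≤ ℓ) : IsPCPath n c k v :=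
  ⟨fun i j hi hik hj hjk => hP.1 i j hi (hik.trans hk) hj (hjk.trans hk),
    fun i hi hik => hP.2 i hi (hik.trans hk)⟩

lemma reverse (hsym : ∀ u w, c u w = c w u) (hP : IsPCPath n c ℓ v) :
    IsPCPath n c ℓ (fun i => v (ℓ + 1 - i)) := by
  refine ⟨fun i j hi hiℓ hj hjℓ hij => ?_, fun i hi hiℓ => ?_⟩
  · have := hP.1 _ _ (by omega) (by omega) (by omega) (by omega) hij
    omega
  · dsimp only
    have h := hP.2 (ℓ - 1 - i) (by omega) (by omega)
    rw [show ℓ - 1 - i = ℓ + 1 - (i + 2) by omega,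
      show ℓ + 1 - (i + 2) + 1 = ℓ + 1 - (i + 1) by omega,
      show ℓ + 1 - (i + 2) + 2 = ℓ + 1 - i by omega] at h
    rw [hsym (v (ℓ + 1 - i)), hsym (v (ℓ + 1 - (i + 1))) (v (ℓ + 1 - (i + 2)))]
    exact h.symm

lemma append {a b : ℕ} {u w : ℕ → Fin n} (hu : IsPCPath n c a u)
    (hw : IsPCPath n c b w) (hdisj : ∀ i j, 1 ≤ i → i ≤ a → 1 ≤ j → j ≤ b → u i ≠ w j)
    (hjoin_left : 2 ≤ a → 1 ≤ b → c (u (a - 1)) (u a) ≠ c (u a) (w 1))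
    (hjoin_right : 1 ≤ a → 2 ≤ b → c (u a) (w 1) ≠ c (w 1) (w 2)) :
    IsPCPath n c (a + b) (fun i => if i ≤ a then u i else w (i - a)) := by
  refine ⟨fun i j hi hiab hj hjab hij => ?_, fun i hi hiab => ?_⟩
  · dsimp only at hij
    split_ifs at hij with hia hja hja
    · exact hu.1 i j hi hia hj hja hij
    · exact absurd hij (hdisj i (j - a) hi hia (by omega) (by omega))
    · exact absurd hij.symm (hdisj j (i - a) hj hja (by omega) (by omega))
    · have := hw.1 (i - a) (j - a) (by omega) (by omega) (by omega) (by omega) hij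
      omega
  · dsimp only
    obtain h | h | h | h : i + 2 ≤ a ∨ i + 1 = a ∨ i = a ∨ a < i := by omega
    · rw [if_pos (by omega), if_pos (by omega), if_pos h]
      exact hu.2 i hi h
    · subst h
      rw [if_pos (by omega), if_pos le_rfl, if_neg (by omega), show i + 2 - (i + 1) = 1 by omega]
      simpa using hjoin_left (by omega) (by omega)
    · subst h
      rw [if_pos le_rfl, if_neg (by omega), if_neg (by omega), show i + 1 - i = 1 by omega,
        show i + 2 - i = 2 by omega]
      exact hjoin_right hi (by omega)
    · rw [if_neg (by omega), if_neg (by omega), if_neg (by omega),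
        show i + 1 - a = i - a + 1 by omega, show i + 2 - a = i - a + 2 by omega]
      exact hw.2 (i - a) (by omega) (by omega)

lemma isPCCycle {L : ℕ} {w : ℕ → Fin n} (hP : IsPCPath n c L w) (hL : 3 ≤ L)
    (hlast : c (w (L - 1)) (w L) ≠ c (w L) (w 1)) (hfirst : c (w L) (w 1) ≠ c (w 1) (w 2)) :
    IsPCCycle n c L (fun i => w (i + 1)) := by
  refine ⟨hL, fun i j hi hj hij => ?_, fun i hi => ?_⟩
  · have := hP.1 (i + 1) (j + 1) (by omega) (by omega) (by omega) (by omega) hij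
    omega
  · obtain h | rfl | rfl : i + 2 < L ∨ L = i + 2 ∨ L = i + 1 := by omega
    · rw [Nat.mod_eq_of_lt (by omega), Nat.mod_eq_of_lt h]
      exact hP.2 (i + 1) (by omega) (by omega)
    · rw [Nat.mod_eq_of_lt (by omega), Nat.mod_self]
      simpa using hlast
    · rw [Nat.mod_self, show i + 2 = 1 + (i + 1) by omega, Nat.add_mod_right,
        Nat.mod_eq_of_lt (by omega)]
      exact hfirst

lemma exists_eq_of_color_ne_head (hP : IsPCPath n c ℓ v)
    (hlong : ∀ ℓ' v', IsPCPath n c ℓ' v' → ℓ' ≤ ℓ) {u : Fin n} (hu : c u (v 1) ≠ c (v 1) (v 2)) :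
    ∃ i ∈ Icc 1 ℓ, v i = u := by
  by_contra! hnot
  have hext := (isPCPath_one u).append hP
    (fun _ j _ _ hj hjℓ h => hnot j (mem_Icc.2 ⟨hj, hjℓ⟩) h.symm) (by omega) fun _ _ => hu
  have := hlong _ _ hext
  omega

lemma exists_eq_of_color_ne_last (hP : IsPCPath n c ℓ v)
    (hlong : ∀ ℓ' v', IsPCPath n c ℓ' v' → ℓ' ≤ ℓ) {u : Fin n}
    (hu : c (v (ℓ - 1)) (v ℓ) ≠ c (v ℓ) u) :
    ∃ i ∈ Icc 1 ℓ, v i = u := by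
  by_contra! hnot
  have hext := hP.append (isPCPath_one u)
    (fun i _ hi hiℓ _ _ => hnot i (mem_Icc.2 ⟨hi, hiℓ⟩)) (fun _ _ => hu) (by omega)
  have := hlong _ _ hext
  omega

lemma sub_le_of_forall_color_ne_head_le (hsym : ∀ u w, c u w = c w u) (hP : IsPCPath n c ℓ v)
    (hlong : ∀ ℓ' v', IsPCPath n c ℓ' v' → ℓ' ≤ ℓ) {k : ℕ} (hmon : MaxMonDegLT n c k) {x : ℕ}
    (hx : ∀ i ∈ Icc 1 ℓ, c (v 1) (v i) ≠ c (v 1) (v 2) → i ≤ x) :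
    n - k ≤ x - 2 := by
  have := hmon.sub_le_card (I := Icc 3 x) fun w hw hcol => by
    obtain ⟨i, hi, rfl⟩ := hP.exists_eq_of_color_ne_head hlong (by rwa [hsym])
    have hix := hx i hi hcol
    have hi1 : i ≠ 1 := by rintro rfl; exact hw rfl
    have hi2 : i ≠ 2 := by rintro rfl; exact hcol rfl
    exact ⟨i, mem_Icc.2 ⟨by grind, hix⟩, rfl⟩
  simp only [Nat.card_Icc] at this
  omega

lemma sub_le_card_color_ne_last (hsym : ∀ u w, c u w = c w u) (hP : IsPCPath n c ℓ v)
    (hlong : ∀ ℓ' v', IsPCPath n c ℓ' v' → ℓ' ≤ ℓ) {k : ℕ} (hmon : MaxMonDegLT n c k) :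
    n - k ≤ #((Icc 1 (ℓ - 1)).filter fun i => c (v i) (v ℓ) ≠ c (v (ℓ - 1)) (v ℓ)) :=
  hmon.sub_le_card fun w hw hcol => by
    obtain ⟨i, hi, rfl⟩ := hP.exists_eq_of_color_ne_last hlong (Ne.symm hcol)
    have hiℓ : i ≠ ℓ := by rintro rfl; exact hw rfl
    refine ⟨i, mem_filter.2 ⟨mem_Icc.2 ⟨(mem_Icc.1 hi).1, by grind⟩, ?_⟩, rfl⟩
    rwa [hsym]

lemma color_sub_one_eq_of_forall_length_le (hP : IsPCPath n c ℓ v) {M x : ℕ}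
    (hcyc : ∀ L w, IsPCCycle n c L w → L ≤ M) (hx : 3 ≤ x) (hMx : M < x) (hxℓ : x ≤ ℓ)
    (hx_head : c (v x) (v 1) ≠ c (v 1) (v 2)) : c (v (x - 1)) (v x) = c (v x) (v 1) := by
  by_contra h
  have := hcyc x _ ((hP.take hxℓ).isPCCycle hx h hx_head)
  omega

/-- The cycle `v 1, …, v y, v ℓ, v (ℓ - 1), …, v x`. -/
lemma exists_isPCCycle_prefix_reverse_suffix (hsym : ∀ u w, c u w = c w u)
    (hP : IsPCPath n c ℓ v) {x y : ℕ} (hy : 2 ≤ y) (hyx : y < x) (hxℓ : x ≤ ℓ)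
    (hy_last : c (v ℓ) (v y) = c (v y) (v (y + 1)))
    (hy_ne : c (v y) (v ℓ) ≠ c (v (ℓ - 1)) (v ℓ))
    (hx_prev : c (v (x - 1)) (v x) = c (v x) (v 1))
    (hx_head : c (v x) (v 1) ≠ c (v 1) (v 2)) :
    ∃ w, IsPCCycle n c (y + (ℓ + 1 - x)) w := by
  have hQ := (hP.take (k := y) (by omega)).append
    ((hP.reverse hsym).take (k := ℓ + 1 - x) (by omega))
    (fun i j hi hiy hj hjx h => by
      have := hP.1 i (ℓ + 1 - j) hi (by omega) (by omega) (by omega) h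
      omega)
    (fun _ _ => by
      have := hP.2 (y - 1) (by omega) (by omega)
      rw [show y - 1 + 1 = y by omega, show y - 1 + 2 = y + 1 by omega, ← hy_last] at this
      rwa [hsym (v y)])
    (fun _ _ => by
      rw [show ℓ + 1 - 1 = ℓ by omega, show ℓ + 1 - 2 = ℓ - 1 by omega, hsym (v ℓ)]
      exact hy_ne)
  set L := y + (ℓ + 1 - x)
  set Q := fun i => if i ≤ y then v i else v (ℓ + 1 - (i - y)) with hQdef
  have hQL : Q L = v x := by
    simp only [hQdef, if_neg (show ¬ L ≤ y by omega)]
    congr 1; omega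
  have hQ1 : Q 1 = v 1 := if_pos (by omega)
  have hQ2 : Q 2 = v 2 := if_pos hy
  refine ⟨_, hQ.isPCCycle (by omega) ?_ (by rwa [hQL, hQ1, hQ2])⟩
  rw [hQL, hQ1, ← hx_prev]
  rcases hxℓ.lt_or_eq with hxℓ | rfl
  · have hQL' : Q (L - 1) = v (x + 1) := by
      simp only [hQdef, if_neg (show ¬ L - 1 ≤ y by omega)]
      congr 1; omega
    have := hP.2 (x - 1) (by omega) (by omega)
    rw [show x - 1 + 1 = x by omega, show x - 1 + 2 = x + 1 by omega] at this
    rw [hQL', hsym (v (x + 1))]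
    exact this.symm
  · have hQL' : Q (L - 1) = v y := by
      simp only [hQdef, if_pos (show L - 1 ≤ y by omega)]
      congr 1; omega
    rw [hQL']
    exact hy_ne

end IsPCPath

theorem claim1_general (n : ℕ) (c : Fin n → Fin n → ℕ)
    (hsym : ∀ u v, c u v = c v u) (hmon : MaxMonDegLT n c (n / 2))
    (hcyc : ∀ L w, IsPCCycle n c L w → L ≤ (n + 1) / 2 + 1)
    (ℓ : ℕ) (v : ℕ → Fin n) (hP : IsPCPath n c ℓ v)
    (hlong : ∀ ℓ' v', IsPCPath n c ℓ' v' → ℓ' ≤ ℓ)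
    (X : Finset ℕ)
    (hX : X = (Finset.Icc 1 ℓ).filter (fun x => c (v 1) (v x) ≠ c (v 1) (v 2)))
    (Y : Finset ℕ)
    (hY : Y = (Finset.Icc 1 (ℓ - 1)).filter
      (fun y => c (v y) (v ℓ) ≠ c (v (ℓ - 1)) (v ℓ)))
    (xp : ℕ) (hxp : xp ∈ X) (hxpmax : ∀ x ∈ X, x ≤ xp)
    (ys : ℕ) (hys : ys ∈ Y)
    (hysgood : ∀ y ∈ Y, y ≤ ys → c (v ℓ) (v y) = c (v y) (v (y + 1))) :
    ys + 3 ≤ xp := by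
  by_contra! hlt
  have hℓn := hP.length_le
  have hxp_ge := hP.sub_le_of_forall_color_ne_head_le hsym hlong hmon fun i hi hcol =>
    hxpmax i (hX ▸ mem_filter.2 ⟨hi, hcol⟩)
  have hY_card := hY ▸ hP.sub_le_card_color_ne_last hsym hlong hmon
  have hY_mem {y : ℕ} (hy : y ∈ Y) :
      y ∈ Icc 1 (ℓ - 1) ∧ c (v y) (v ℓ) ≠ c (v (ℓ - 1)) (v ℓ) := by
    rwa [hY, mem_filter] at hy
  have hY_sub : Y ⊆ Ico 1 (ℓ - 1) := fun y hy => by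
    obtain ⟨hy, hcol⟩ := hY_mem hy
    have : y ≠ ℓ - 1 := by rintro rfl; exact hcol rfl
    grind
  have hys_lt := mem_Ico.1 (hY_sub hys)
  obtain ⟨⟨hxp1, hxpℓ⟩, hxp_col⟩ := by simpa only [hX, mem_filter, mem_Icc] using hxp
  rw [hsym] at hxp_col
  have hxp_prev :=
    hP.color_sub_one_eq_of_forall_length_le hcyc (by omega) (by omega) hxpℓ hxp_col
  have hℓ : (n + 1) / 2 + 3 ≤ ℓ := by
    rcases hxpℓ.lt_or_eq with h | rfl
    · omega
    have h1 : 1 ∉ Y := fun h1 => (hY_mem h1).2 (by rw [hsym, hxp_prev])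
    have := card_le_card (s := Y) (t := Ico 2 (xp - 1)) fun y hy => by
      have := mem_Ico.1 (hY_sub hy)
      exact mem_Ico.2 ⟨by grind, this.2⟩
    simp only [Nat.card_Ico] at this
    omega
  -- `ys` itself if `ys < xp`; otherwise every element of `Y` below `xp` is good, and counting
  -- finds one that is large enough
  obtain ⟨y, hyY, hy_ge, hy_le, hy_lt⟩ :
      ∃ y ∈ Y, xp + (n + 1) / 2 + 1 ≤ y + ℓ ∧ y ≤ ys ∧ y < xp := by
    rcases lt_or_ge ys xp with h | h
    · exact ⟨ys, hys, by omega, le_rfl, h⟩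
    obtain ⟨y, hy, hy_ge, hy_lt⟩ :=
      exists_mem_Ico_of_subset_Ico hY_sub (a := xp + (n + 1) / 2 + 1 - ℓ) (b := xp) (by omega)
    exact ⟨y, hy, by omega, by omega, hy_lt⟩
  obtain ⟨w, hw⟩ := hP.exists_isPCCycle_prefix_reverse_suffix hsym (by omega) hy_lt hxpℓ
    (hysgood y hyY hy_le) (hY_mem hyY).2 hxp_prev hxp_col
  have := hcyc _ w hw
  omega

/-- **Claim 1.** With `X = {x ∈ [1,ℓ] : c (v 1) (v x) ≠ c (v 1) (v 2)}`,
`Y = {y ∈ [1,ℓ-1] : c (v y) (v ℓ) ≠ c (v (ℓ-1)) (v ℓ)}`, `x_p = max X` and `y_s`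
the largest element of `Y` such that `c (v ℓ) (v yᵢ) = c (v yᵢ) (v (yᵢ+1))` for all
`yᵢ ∈ Y` with `yᵢ ≤ y_s`, we have `y_s ≤ x_p - 3`. -/
theorem claim1 (n : ℕ) (hn : 6 ≤ n) (c : Fin n → Fin n → ℕ)
    (hsym : ∀ u v, c u v = c v u) (hmon : MaxMonDegLT n c (n / 2))
    (hcyc : ∀ L w, IsPCCycle n c L w → L ≤ (n + 1) / 2 + 1)
    (ℓ : ℕ) (v : ℕ → Fin n) (hP : IsPCPath n c ℓ v)
    (hlong : ∀ ℓ' v', IsPCPath n c ℓ' v' → ℓ' ≤ ℓ)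
    (X : Finset ℕ)
    (hX : X = (Finset.Icc 1 ℓ).filter (fun x => c (v 1) (v x) ≠ c (v 1) (v 2)))
    (Y : Finset ℕ)
    (hY : Y = (Finset.Icc 1 (ℓ - 1)).filter
      (fun y => c (v y) (v ℓ) ≠ c (v (ℓ - 1)) (v ℓ)))
    (xp : ℕ) (hxp : xp ∈ X) (hxpmax : ∀ x ∈ X, x ≤ xp)
    (ys : ℕ) (hys : ys ∈ Y)
    (hysgood : ∀ y ∈ Y, y ≤ ys → c (v ℓ) (v y) = c (v y) (v (y + 1)))
    (hysmax : ∀ y' ∈ Y, (∀ y ∈ Y, y ≤ y' → c (v ℓ) (v y) = c (v y) (v (y + 1))) →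
      y' ≤ ys) :
    ys + 3 ≤ xp :=
  claim1_general n c hsym hmon hcyc ℓ v hP hlong X hX Y hY xp hxp hxpmax ys hys hysgood
end

section
/- Suppose Δ^mon(K_n^c) < ⌊n/2⌋, every properly colored cycle in K_n^c has length at most ⌈n/2⌉ + 1, P = (1,…,ℓ) is a longest properly colored path maximizing |S(P)|, and the cycle C_0 = (1,…,y_s,ℓ,ℓ−1,…,w,1) has length ⌈n/2⌉+1. Then for every y ∈ Y with y_s + 1 ≤ y ≤ w − 1, we have c(y, y−1) = c(y, ℓ). -/
open Finset

set_option maxHeartbeats 1000000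
set_option linter.all false


/-- The set `Y` of the paper, as a set of indices on the path `(v 1, …, v ℓ)`. -/
def Yset (n : ℕ) (c : Fin n → Fin n → ℕ) (ℓ : ℕ) (v : ℕ → Fin n) : Finset ℕ :=
  (Finset.Icc 1 (ℓ - 1)).filter (fun y => c (v y) (v ℓ) ≠ c (v (ℓ - 1)) (v ℓ))

/-- The index `y_s`: the largest `y ∈ Y` such that
`c (v ℓ) (v z) = c (v z) (v (z+1))` for all `z ∈ Y` with `z ≤ y`
(junk value `0` if none exists). -/
def ysIdx (n : ℕ) (c : Fin n → Fin n → ℕ) (ℓ : ℕ) (v : ℕ → Fin n) : ℕ :=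
  ((Yset n c ℓ v).filter (fun y => ∀ z ∈ Yset n c ℓ v, z ≤ y →
    c (v ℓ) (v z) = c (v z) (v (z + 1)))).sup id

/-- `|S(P)| = |Y ∩ [y₁, y_s]|`, the quantity maximized over longest paths. -/
def SCard (n : ℕ) (c : Fin n → Fin n → ℕ) (ℓ : ℕ) (v : ℕ → Fin n) : ℕ :=
  ((Yset n c ℓ v).filter (fun z => z ≤ ysIdx n c ℓ v)).card

lemma pcCycle_build (n : ℕ) (c : Fin n → Fin n → ℕ)
    (hsym : ∀ u v, c u v = c v u)
    (ℓ : ℕ) (v : ℕ → Fin n) (hP : IsPCPath n c ℓ v)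
    (y m : ℕ) (hy2 : 2 ≤ y) (hym : y < m) (hml : m ≤ ℓ)
    (h1 : c (v (y - 1)) (v y) ≠ c (v y) (v ℓ))
    (h2 : c (v y) (v ℓ) ≠ c (v ℓ) (v (if m = ℓ then 1 else ℓ - 1)))
    (h3 : m < ℓ → c (v (m + 1)) (v m) ≠ c (v m) (v 1))
    (h4 : c (v m) (v 1) ≠ c (v 1) (v 2)) :
    IsPCCycle n c (y + (ℓ - m) + 1)
      (fun k => if k < y then v (k + 1) else v (ℓ - (k - y))) := by
  obtain ⟨hinj, htr⟩ := hP
  refine ⟨by omega, ?_, ?_⟩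
  · intro i j hi hj hij
    simp only at hij
    split_ifs at hij with hiy hjy hjy
    · have := hinj (i+1) (j+1) (by omega) (by omega) (by omega) (by omega) hij
      omega
    · have := hinj (i+1) (ℓ - (j - y)) (by omega) (by omega) (by omega) (by omega) hij
      omega
    · have := hinj (ℓ - (i - y)) (j+1) (by omega) (by omega) (by omega) (by omega) hij
      omega
    · have := hinj (ℓ - (i - y)) (ℓ - (j - y)) (by omega) (by omega) (by omega) (by omega) hij
      omega
  · intro i hi
    simp only
    by_cases hc1 : i + 2 < y
    · rw [Nat.mod_eq_of_lt (show i + 1 < y + (ℓ - m) + 1 by omega),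
        Nat.mod_eq_of_lt (show i + 2 < y + (ℓ - m) + 1 by omega),
        if_pos (show i < y by omega), if_pos (show i + 1 < y by omega),
        if_pos (show i + 2 < y by omega),
        show i + 2 + 1 = i + 1 + 2 from by omega]
      exact htr (i+1) (by omega) (by omega)
    by_cases hc2 : i + 2 = y
    · rw [Nat.mod_eq_of_lt (show i + 1 < y + (ℓ - m) + 1 by omega),
        Nat.mod_eq_of_lt (show i + 2 < y + (ℓ - m) + 1 by omega),
        if_pos (show i < y by omega), if_pos (show i + 1 < y by omega),
        if_neg (show ¬ (i + 2 < y) by omega),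
        show ℓ - (i + 2 - y) = ℓ from by omega,
        show i + 1 + 1 = y from by omega, show i + 1 = y - 1 from by omega]
      exact h1
    by_cases hc3 : i + 1 = y
    · by_cases hmℓ : m = ℓ
      · -- then L = y + 1, i = y - 1, i + 2 = L
        rw [Nat.mod_eq_of_lt (show i + 1 < y + (ℓ - m) + 1 by omega),
          show i + 2 = y + (ℓ - m) + 1 from by omega, Nat.mod_self,
          if_pos (show i < y by omega), if_neg (show ¬ (i + 1 < y) by omega),
          if_pos (show 0 < y by omega),
          show i + 1 = y from hc3, show ℓ - (y - y) = ℓ from by omega,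
          show (0:ℕ) + 1 = 1 from rfl]
        rw [if_pos hmℓ] at h2
        exact h2
      · rw [Nat.mod_eq_of_lt (show i + 1 < y + (ℓ - m) + 1 by omega),
          Nat.mod_eq_of_lt (show i + 2 < y + (ℓ - m) + 1 by omega),
          if_pos (show i < y by omega), if_neg (show ¬ (i + 1 < y) by omega),
          if_neg (show ¬ (i + 2 < y) by omega),
          show i + 1 = y from hc3, show ℓ - (y - y) = ℓ from by omega,
          show ℓ - (i + 2 - y) = ℓ - 1 from by omega]
        rw [if_neg hmℓ] at h2
        exact h2
    -- now i ≥ y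
    have hiy : y ≤ i := by omega
    by_cases hc4 : i = y + (ℓ - m)
    · -- i = L - 1
      rw [show i + 1 = y + (ℓ - m) + 1 from by omega, Nat.mod_self,
        show i + 2 = (y + (ℓ - m) + 1) + 1 from by omega, Nat.add_mod_left,
        Nat.mod_eq_of_lt (show 1 < y + (ℓ - m) + 1 by omega),
        if_neg (show ¬ (i < y) by omega), if_pos (show 0 < y by omega),
        if_pos (show 1 < y by omega),
        show ℓ - (i - y) = m from by omega, show (0:ℕ) + 1 = 1 from rfl,
        show (1:ℕ) + 1 = 2 from rfl]
      exact h4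
    by_cases hc5 : i + 1 = y + (ℓ - m)
    · -- i = L - 2, needs m < ℓ
      have hmlt : m < ℓ := by omega
      rw [Nat.mod_eq_of_lt (show i + 1 < y + (ℓ - m) + 1 by omega),
        show i + 2 = y + (ℓ - m) + 1 from by omega, Nat.mod_self,
        if_neg (show ¬ (i < y) by omega), if_neg (show ¬ (i + 1 < y) by omega),
        if_pos (show 0 < y by omega),
        show ℓ - (i - y) = m + 1 from by omega,
        show ℓ - (i + 1 - y) = m from by omega,
        show (0:ℕ) + 1 = 1 from rfl]
      exact h3 hmlt
    · -- middle of descending segment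
      have ha : m ≤ ℓ - (i + 2 - y) := by omega
      rw [Nat.mod_eq_of_lt (show i + 1 < y + (ℓ - m) + 1 by omega),
        Nat.mod_eq_of_lt (show i + 2 < y + (ℓ - m) + 1 by omega),
        if_neg (show ¬ (i < y) by omega), if_neg (show ¬ (i + 1 < y) by omega),
        if_neg (show ¬ (i + 2 < y) by omega),
        show ℓ - (i - y) = (ℓ - (i + 2 - y)) + 2 from by omega,
        show ℓ - (i + 1 - y) = (ℓ - (i + 2 - y)) + 1 from by omega]
      rw [hsym (v ((ℓ - (i + 2 - y)) + 2)) (v ((ℓ - (i + 2 - y)) + 1)),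
        hsym (v ((ℓ - (i + 2 - y)) + 1)) (v (ℓ - (i + 2 - y)))]
      exact (htr (ℓ - (i + 2 - y)) (by omega) (by omega)).symm

/-- **Claim 4(a).** Under the standing assumptions (with `P` a longest properly
colored path maximizing `|S(P)|`, `y₁, y_s, u, w` as in Claim 2, and the cycle
`C₀ = (1, …, y_s, ℓ, ℓ-1, …, w, 1)` of length exactly `⌈n/2⌉ + 1`), every `y ∈ Y`
with `y_s + 1 ≤ y ≤ w - 1` satisfies `c (v y) (v (y-1)) = c (v y) (v ℓ)`. -/
theorem claim4a (n : ℕ) (hn : 6 ≤ n) (c : Fin n → Fin n → ℕ)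
    (hsym : ∀ u v, c u v = c v u) (hmon : MaxMonDegLT n c (n / 2))
    (hcyc : ∀ L w, IsPCCycle n c L w → L ≤ (n + 1) / 2 + 1)
    (ℓ : ℕ) (v : ℕ → Fin n) (hP : IsPCPath n c ℓ v)
    (hlong : ∀ ℓ' v', IsPCPath n c ℓ' v' → ℓ' ≤ ℓ)
    (hmaxS : ∀ v' : ℕ → Fin n, IsPCPath n c ℓ v' → SCard n c ℓ v' ≤ SCard n c ℓ v)
    (X : Finset ℕ)
    (hX : X = (Finset.Icc 1 ℓ).filter (fun x => c (v 1) (v x) ≠ c (v 1) (v 2)))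
    (y₁ : ℕ) (hy1 : y₁ ∈ Yset n c ℓ v) (hy1min : ∀ y ∈ Yset n c ℓ v, y₁ ≤ y)
    (ys : ℕ) (hysY : ys ∈ Yset n c ℓ v)
    (hysgood : ∀ y ∈ Yset n c ℓ v, y ≤ ys → c (v ℓ) (v y) = c (v y) (v (y + 1)))
    (hysmax : ∀ y' ∈ Yset n c ℓ v,
      (∀ y ∈ Yset n c ℓ v, y ≤ y' → c (v ℓ) (v y) = c (v y) (v (y + 1))) → y' ≤ ys)
    (u : ℕ) (hu1 : ys < u) (hu2 : u < ℓ)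
    (hugood : ∀ x ∈ X, ys + 1 ≤ x → x ≤ u → c (v 1) (v x) = c (v x) (v (x + 1)))
    (humax : ∀ u', ys < u' → u' < ℓ →
      (∀ x ∈ X, ys + 1 ≤ x → x ≤ u' → c (v 1) (v x) = c (v x) (v (x + 1))) → u' ≤ u)
    (w : ℕ) (hwX : w ∈ X) (huw : u < w) (hwmin : ∀ x ∈ X, u < x → w ≤ x)
    (hC0 : IsPCCycle n c (ys + (ℓ - w) + 1)
        (fun k => if k < ys then v (k + 1) else v (ℓ - (k - ys))))
    (hC0len : ys + (ℓ - w) + 1 = (n + 1) / 2 + 1) :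
    ∀ y ∈ Yset n c ℓ v, ys + 1 ≤ y → y ≤ w - 1 →
      c (v y) (v (y - 1)) = c (v y) (v ℓ) := by
  intro y hyY hyys hyw
  simp only [Yset, Finset.mem_filter, Finset.mem_Icc] at hyY hysY
  obtain ⟨⟨hyl, hyr⟩, hyne⟩ := hyY
  obtain ⟨⟨hysl, hysr⟩, hysne⟩ := hysY
  subst hX
  simp only [Finset.mem_filter, Finset.mem_Icc] at hwX
  obtain ⟨⟨hwl, hwr⟩, hwne⟩ := hwX
  by_contra hcon
  have h1 : c (v (y - 1)) (v y) ≠ c (v y) (v ℓ) := by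
    rw [hsym (v (y - 1)) (v y)]; exact hcon
  have h4 : c (v w) (v 1) ≠ c (v 1) (v 2) := by
    rw [hsym (v w) (v 1)]; exact hwne
  rcases Nat.lt_or_ge w ℓ with hwlt | hwge
  · -- case w < ℓ
    have h3 : c (v (w + 1)) (v w) ≠ c (v w) (v 1) := by
      have e1 : ys + (ℓ - w) - 1 + 1 = ys + (ℓ - w) := by omega
      have e2 : ys + (ℓ - w) < ys + (ℓ - w) + 1 := by omega
      have e3 : ys + (ℓ - w) - 1 + 2 = ys + (ℓ - w) + 1 := by omega
      have e4 : ¬ (ys + (ℓ - w) - 1 < ys) := by omega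
      have e5 : ¬ (ys + (ℓ - w) < ys) := by omega
      have e6 : 0 < ys := by omega
      have e7 : ℓ - (ys + (ℓ - w) - 1 - ys) = w + 1 := by omega
      have e8 : ℓ - (ys + (ℓ - w) - ys) = w := by omega
      have h := hC0.2.2 (ys + (ℓ - w) - 1) (by omega)
      rw [e1] at h
      rw [Nat.mod_eq_of_lt e2] at h
      rw [e3, Nat.mod_self] at h
      simp only at h
      rw [if_neg e4, if_neg e5, if_pos e6, e7, e8] at h
      exact h
    clear hC0
    have h2 : c (v y) (v ℓ) ≠ c (v ℓ) (v (if w = ℓ then 1 else ℓ - 1)) := by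
      rw [if_neg (show ¬ w = ℓ from by omega), hsym (v ℓ) (v (ℓ - 1))]
      exact hyne
    have hcy := pcCycle_build n c hsym ℓ v hP y w (by omega) (by omega) (by omega)
      h1 h2 (fun _ => h3) h4
    have := hcyc _ _ hcy
    clear hcy
    omega
  · -- case w = ℓ
    have hwe : w = ℓ := le_antisymm hwr hwge
    subst hwe
    clear hC0
    by_cases heq : c (v (w - 1)) (v w) = c (v w) (v 1)
    · have h2 : c (v y) (v w) ≠ c (v w) (v (if w = w then 1 else w - 1)) := by
        rw [if_pos rfl, ← heq]
        exact hyne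
      have hcy := pcCycle_build n c hsym w v hP y w (by omega) (by omega) le_rfl
        h1 h2 (fun hlt => absurd hlt (lt_irrefl w)) h4
      have := hcyc _ _ hcy
      clear hcy
      omega
    · have h1' : c (v (w - 1 - 1)) (v (w - 1)) ≠ c (v (w - 1)) (v w) := by
        have h := hP.2 (w - 2) (by omega) (by omega)
        rw [show w - 2 + 1 = w - 1 from by omega, show w - 2 + 2 = w from by omega] at h
        rw [show w - 1 - 1 = w - 2 from by omega]
        exact h
      have h2 : c (v (w - 1)) (v w) ≠ c (v w) (v (if w = w then 1 else w - 1)) := by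
        rw [if_pos rfl]
        exact heq
      have hcy := pcCycle_build n c hsym w v hP (w - 1) w (by omega) (by omega) le_rfl
        h1' h2 (fun hlt => absurd hlt (lt_irrefl w)) h4
      have := hcyc _ _ hcy
      clear hcy
      omega
end

section
/- In an edge-colored complete graph K_n^c with Δ^mon(K_n^c) < ⌊n/2⌋ and n ≥ 3, if every properly colored cycle has at most ⌈n/2⌉ + 1 vertices, then every longest properly colored path has at least ⌈n/2⌉ + 3 vertices. -/
open Finset

/-- In `K_n^c` (`n ≥ 3`) with `Δ^mon < ⌊n/2⌋`: provided every properly colored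
cycle has at most `⌈n/2⌉ + 1` vertices, every longest properly colored path has
at least `⌈n/2⌉ + 3` vertices. -/
theorem longest_path_length (n : ℕ) (hn : 3 ≤ n) (c : Fin n → Fin n → ℕ)
    (hsym : ∀ u v, c u v = c v u) (hmon : MaxMonDegLT n c (n / 2))
    (hcyc : ∀ L w, IsPCCycle n c L w → L ≤ (n + 1) / 2 + 1) :
    ∀ ℓ (v : ℕ → Fin n), IsPCPath n c ℓ v →
      (∀ ℓ' v', IsPCPath n c ℓ' v' → ℓ' ≤ ℓ) → (n + 1) / 2 + 3 ≤ ℓ := by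
  classical
  intro ℓ v hpath hmax
  by_contra hlt
  push_neg at hlt
  obtain ⟨hinj, hprop⟩ := hpath
  set m := (n + 1) / 2 with hm
  have hm2 : 2 ≤ m := by omega
  -- the set of vertices on the path
  set P : Finset (Fin n) := (Finset.Icc 1 ℓ).image v with hP
  -- generic cardinality bound for the "proper neighborhood" of a vertex
  have hcard : ∀ a b : Fin n,
      m ≤ (univ.filter (fun u => u ≠ a ∧ c a u ≠ c a b)).card := by
    intro a b
    have h1 := Finset.card_filter_add_card_filter_not
      (s := (univ : Finset (Fin n)).filter (fun u => u ≠ a))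
      (p := fun u => c a u = c a b)
    rw [Finset.filter_filter, Finset.filter_filter] at h1
    have h2 : ((univ : Finset (Fin n)).filter (fun u => u ≠ a)).card = n - 1 := by
      rw [Finset.filter_ne']
      rw [Finset.card_erase_of_mem (Finset.mem_univ a)]
      simp
    rw [h2] at h1
    have h5 : ((univ : Finset (Fin n)).filter (fun u => u ≠ a ∧ ¬ c a u = c a b)).card
        = ((univ : Finset (Fin n)).filter (fun u => u ≠ a ∧ c a u ≠ c a b)).card := rfl
    rw [h5] at h1
    have h3 := hmon a (c a b)
    have h4 : ((univ : Finset (Fin n)).filter (fun u => u ≠ a ∧ c a u = c a b)).card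
        < n / 2 := h3
    omega
  -- any proper neighbor of v 1 lies on the path
  have hX_in_P : ∀ u : Fin n, u ≠ v 1 → c (v 1) u ≠ c (v 1) (v 2) → u ∈ P := by
    intro u hu1 huc
    by_contra huP
    have hnot : ∀ i, 1 ≤ i → i ≤ ℓ → v i ≠ u := by
      intro i h1 h2 h
      exact huP (Finset.mem_image.mpr ⟨i, Finset.mem_Icc.mpr ⟨h1, h2⟩, h⟩)
    set v' : ℕ → Fin n := fun i => if i = 1 then u else v (i - 1) with hv'
    have hpc : IsPCPath n c (ℓ + 1) v' := by
      constructor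
      · intro i j hi1 hi2 hj1 hj2 hij
        rcases eq_or_ne i 1 with rfl | hi
        · rcases eq_or_ne j 1 with rfl | hj
          · rfl
          · exfalso
            exact hnot (j - 1) (by omega) (by omega)
              (by simpa [hv', hj] using hij.symm)
        · rcases eq_or_ne j 1 with rfl | hj
          · exfalso
            exact hnot (i - 1) (by omega) (by omega)
              (by simpa [hv', hi] using hij)
          · have := hinj (i - 1) (j - 1) (by omega) (by omega) (by omega) (by omega)
              (by simpa [hv', hi, hj] using hij)
            omega
      · intro i h1 h2
        rcases eq_or_ne i 1 with rfl | hi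
        · simpa [hv', hsym u (v 1)] using huc
        · have hstep := hprop (i - 1) (by omega) (by omega)
          have e2 : i + 1 ≠ 1 := by omega
          have e3 : i + 2 ≠ 1 := by omega
          have f1 : i + 1 - 1 = i - 1 + 1 := by omega
          have f2 : i + 2 - 1 = i - 1 + 2 := by omega
          simp only [hv', if_neg hi, if_neg e2, if_neg e3, f1, f2]
          exact hstep
    exact absurd (hmax (ℓ + 1) v' hpc) (by omega)
  -- any proper neighbor of v ℓ lies on the path
  have hY_in_P : ∀ u : Fin n, u ≠ v ℓ → c (v ℓ) u ≠ c (v ℓ) (v (ℓ - 1)) → u ∈ P := by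
    intro u hu1 huc
    by_contra huP
    have hnot : ∀ i, 1 ≤ i → i ≤ ℓ → v i ≠ u := by
      intro i h1 h2 h
      exact huP (Finset.mem_image.mpr ⟨i, Finset.mem_Icc.mpr ⟨h1, h2⟩, h⟩)
    set v' : ℕ → Fin n := fun i => if i = ℓ + 1 then u else v i with hv'
    have hpc : IsPCPath n c (ℓ + 1) v' := by
      constructor
      · intro i j hi1 hi2 hj1 hj2 hij
        rcases eq_or_ne i (ℓ + 1) with rfl | hi
        · rcases eq_or_ne j (ℓ + 1) with rfl | hj
          · rfl
          · exfalso
            exact hnot j (by omega) (by omega) (by simpa [hv', hj] using hij.symm)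
        · rcases eq_or_ne j (ℓ + 1) with rfl | hj
          · exfalso
            exact hnot i (by omega) (by omega) (by simpa [hv', hi] using hij)
          · exact hinj i j (by omega) (by omega) (by omega) (by omega)
              (by simpa [hv', hi, hj] using hij)
      · intro i h1 h2
        rcases eq_or_ne (i + 2) (ℓ + 1) with he | hne
        · have hiℓ : i = ℓ - 1 := by omega
          have e1 : i ≠ ℓ + 1 := by omega
          have e2 : i + 1 ≠ ℓ + 1 := by omega
          have e3 : i + 1 = ℓ := by omega
          have e4 : ℓ ≠ ℓ + 1 := by omega
          simp only [hv', if_neg e1, if_neg e2, if_pos he, e3, if_neg e4]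
          intro h
          exact huc (by rw [← h, hiℓ, hsym])
        · have e1 : i ≠ ℓ + 1 := by omega
          have e2 : i + 1 ≠ ℓ + 1 := by omega
          have e3 : i + 2 ≠ ℓ + 1 := hne
          have hstep := hprop i (by omega) (by omega)
          simp only [hv', if_neg e1, if_neg e2, if_neg e3]
          exact hstep
    exact absurd (hmax (ℓ + 1) v' hpc) (by omega)
  -- X is contained in the image of [3, ℓ]
  set X : Finset (Fin n) :=
    univ.filter (fun u => u ≠ v 1 ∧ c (v 1) u ≠ c (v 1) (v 2)) with hX
  have hXsub : X ⊆ (Finset.Icc 3 ℓ).image v := by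
    intro u hu
    rw [hX, Finset.mem_filter] at hu
    obtain ⟨-, hu1, huc⟩ := hu
    have huP := hX_in_P u hu1 huc
    rw [hP] at huP
    obtain ⟨i, hi, hiv⟩ := Finset.mem_image.mp huP
    rw [Finset.mem_Icc] at hi
    obtain ⟨hi1, hi2⟩ := hi
    have hi3 : 3 ≤ i := by
      by_contra h
      have : i = 1 ∨ i = 2 := by omega
      rcases this with rfl | rfl
      · exact hu1 hiv.symm
      · exact huc (by rw [← hiv])
    exact Finset.mem_image.mpr ⟨i, Finset.mem_Icc.mpr ⟨hi3, hi2⟩, hiv⟩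
  have hXcard : m ≤ X.card := hcard (v 1) (v 2)
  have hXle : X.card ≤ ℓ - 2 := by
    calc X.card ≤ ((Finset.Icc 3 ℓ).image v).card := Finset.card_le_card hXsub
    _ ≤ (Finset.Icc 3 ℓ).card := Finset.card_image_le
    _ = ℓ - 2 := by rw [Nat.card_Icc]; omega
  have hℓeq : ℓ = m + 2 := by omega
  -- Y side
  set Y : Finset (Fin n) :=
    univ.filter (fun u => u ≠ v ℓ ∧ c (v ℓ) u ≠ c (v ℓ) (v (ℓ - 1))) with hY
  have hYsub : Y ⊆ (Finset.Icc 1 (ℓ - 2)).image v := by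
    intro u hu
    rw [hY, Finset.mem_filter] at hu
    obtain ⟨-, hu1, huc⟩ := hu
    have huP := hY_in_P u hu1 huc
    rw [hP] at huP
    obtain ⟨i, hi, hiv⟩ := Finset.mem_image.mp huP
    rw [Finset.mem_Icc] at hi
    have hiℓ : i ≠ ℓ := fun h => hu1 (by rw [← hiv, h])
    have hiℓ1 : i ≠ ℓ - 1 := fun h => huc (by rw [← hiv, h])
    exact Finset.mem_image.mpr ⟨i, Finset.mem_Icc.mpr ⟨hi.1, by omega⟩, hiv⟩
  have hYcard : m ≤ Y.card := hcard (v ℓ) (v (ℓ - 1))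
  -- equalities
  have hXeq : X = (Finset.Icc 3 ℓ).image v := by
    refine Finset.eq_of_subset_of_card_le hXsub ?_
    calc ((Finset.Icc 3 ℓ).image v).card ≤ (Finset.Icc 3 ℓ).card := Finset.card_image_le
    _ = ℓ - 2 := by rw [Nat.card_Icc]; omega
    _ ≤ X.card := by omega
  have hYeq : Y = (Finset.Icc 1 (ℓ - 2)).image v := by
    refine Finset.eq_of_subset_of_card_le hYsub ?_
    calc ((Finset.Icc 1 (ℓ - 2)).image v).card ≤ (Finset.Icc 1 (ℓ - 2)).card :=
      Finset.card_image_le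
    _ = ℓ - 2 := by rw [Nat.card_Icc]; omega
    _ ≤ Y.card := by omega
  -- v ℓ ∈ X and v 1 ∈ Y
  have hvℓX : v ℓ ∈ X := by
    rw [hXeq]
    exact Finset.mem_image.mpr ⟨ℓ, Finset.mem_Icc.mpr ⟨by omega, le_rfl⟩, rfl⟩
  have hv1Y : v 1 ∈ Y := by
    rw [hYeq]
    exact Finset.mem_image.mpr ⟨1, Finset.mem_Icc.mpr ⟨le_rfl, by omega⟩, rfl⟩
  rw [hX, Finset.mem_filter] at hvℓX
  rw [hY, Finset.mem_filter] at hv1Y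
  obtain ⟨-, -, hXc⟩ := hvℓX
  obtain ⟨-, -, hYc⟩ := hv1Y
  -- build the properly colored cycle of length ℓ
  set w : ℕ → Fin n := fun i => v (i + 1) with hw
  have hcycle : IsPCCycle n c ℓ w := by
    refine ⟨by omega, ?_, ?_⟩
    · intro i j hi hj hij
      have := hinj (i + 1) (j + 1) (by omega) (by omega) (by omega) (by omega) hij
      omega
    · intro i hi
      rcases Nat.lt_or_ge (i + 2) ℓ with h | h
      · have e1 : (i + 1) % ℓ = i + 1 := Nat.mod_eq_of_lt (by omega)
        have e2 : (i + 2) % ℓ = i + 2 := Nat.mod_eq_of_lt h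
        rw [e1, e2]
        have hstep := hprop (i + 1) (by omega) (by omega)
        simpa [hw] using hstep
      · rcases eq_or_lt_of_le h with he | hlt2
        · -- i + 2 = ℓ
          obtain rfl : ℓ = i + 2 := he
          have e1 : (i + 1) % (i + 2) = i + 1 := Nat.mod_eq_of_lt (by omega)
          have e2 : (i + 2) % (i + 2) = 0 := Nat.mod_self _
          rw [e1, e2]
          simp only [hw, Nat.zero_add]
          -- goal: c (v (i+1)) (v (i+2)) ≠ c (v (i+2)) (v 1)
          intro hcontra
          have h1 : i + 2 - 1 = i + 1 := by omega
          rw [h1] at hYc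
          exact hYc (hcontra.symm.trans (hsym (v (i + 1)) (v (i + 2))))
        · -- i + 1 = ℓ
          obtain rfl : ℓ = i + 1 := by omega
          have e1 : (i + 1) % (i + 1) = 0 := Nat.mod_self _
          have e2 : (i + 2) % (i + 1) = 1 := by
            have h12 : i + 2 = (i + 1) + 1 := by omega
            rw [h12, Nat.add_mod_left]
            exact Nat.mod_eq_of_lt (by omega)
          rw [e1, e2]
          simp only [hw, Nat.zero_add]
          -- goal: c (v (i+1)) (v 1) ≠ c (v 1) (v 2)
          intro hcontra
          exact hXc ((hsym (v 1) (v (i + 1))).trans hcontra)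
  have := hcyc ℓ w hcycle
  omega
end

section
/- There exists an edge coloring of the complete graph K_{2m} (m ≥ 2) in which every vertex has color degree exactly m but which contains no properly colored Hamiltonian cycle. -/
open Finset

/-!
Split the vertices into `A = {0, …, m-1}` and `B = {m, …, 2m-1}`. Edges inside `A` get colour
`m`, an edge from `A` to `b ∈ B` gets colour `b`, and an edge `bb'` inside `B` gets `b + b'`.
Every vertex `x` sees all of `A` in the single colour `max m x`, so on a properly coloured
Hamiltonian cycle no vertex has both neighbours in `A`; as `|A|` is half the length of the
cycle, counting shows that every vertex has exactly one neighbour in `A`. The neighbour `a ∈ A`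
of the vertex `m ∈ B` then has its other neighbour in `A` too, and both edges at `a` have
colour `m`.
-/

theorem Fin.sub_one_or_add_one_of_two_mul_card_filter_eq {n : ℕ} [NeZero n] (q : Fin n → Prop)
    [DecidablePred q] (hq : ∀ i, ¬ (q (i - 1) ∧ q (i + 1))) (hcard : 2 * #{i | q i} = n)
    (i : Fin n) : q (i - 1) ∨ q (i + 1) := by
  by_contra! hi
  have hpred : ∑ j : Fin n, (if q (j - 1) then 1 else 0) = #{j | q j} := by
    rw [card_filter]; exact Fintype.sum_equiv (Equiv.subRight 1) _ _ fun _ => rfl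
  have hsucc : ∑ j : Fin n, (if q (j + 1) then 1 else 0) = #{j | q j} := by
    rw [card_filter]; exact Fintype.sum_equiv (Equiv.addRight 1) _ _ fun _ => rfl
  have hlt : ∑ j : Fin n, ((if q (j - 1) then 1 else 0) + (if q (j + 1) then 1 else 0))
      < ∑ _j : Fin n, 1 :=
    sum_lt_sum (fun j _ => by have := hq j; split_ifs <;> simp_all)
      ⟨i, mem_univ _, by simp [hi]⟩
  rw [sum_add_distrib, hpred, hsucc, sum_const, smul_eq_mul, mul_one] at hlt
  omega

theorem IsPCCycle.injective {n : ℕ} {c : Fin n → Fin n → ℕ} {w : ℕ → Fin n}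
    (h : IsPCCycle n c n w) : Function.Injective (fun i : Fin n => w i) :=
  fun i j hij => Fin.ext (h.2.1 i j i.isLt j.isLt hij)

theorem IsPCCycle.color_ne {n : ℕ} [NeZero n] {c : Fin n → Fin n → ℕ} {w : ℕ → Fin n}
    (h : IsPCCycle n c n w) (i : Fin n) : c (w ↑(i - 1)) (w i) ≠ c (w i) (w ↑(i + 1)) := by
  have h' := h.2.2 (i - 1 : Fin n) (i - 1).isLt
  have hadd1 (j : Fin n) : (j.val + 1) % n = (j + 1).val := by rw [Fin.val_add]; simp
  have hadd2 (j : Fin n) : (j.val + 2) % n = (j + 2).val := by rw [Fin.val_add]; simp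
  rwa [hadd1, hadd2, sub_add_cancel, show i - 1 + 2 = i + 1 by grind] at h'

namespace FujitaMagnant

def coloring (m : ℕ) (u v : Fin (2 * m)) : ℕ :=
  if u.val < m then (if v.val < m then m else v) else (if v.val < m then u else u + v)

variable {m : ℕ}

theorem coloring_comm (u v : Fin (2 * m)) : coloring m u v = coloring m v u := by
  unfold coloring
  split_ifs <;> omega

theorem coloring_of_val_lt_right (x : Fin (2 * m)) {a : Fin (2 * m)} (ha : a.val < m) :
    coloring m x a = max m x.val := by
  unfold coloring
  split_ifs <;> omega

theorem coloring_of_val_lt_left (x : Fin (2 * m)) {a : Fin (2 * m)} (ha : a.val < m) :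
    coloring m a x = max m x.val := by
  rw [coloring_comm, coloring_of_val_lt_right x ha]

theorem image_coloring_of_val_lt {v : Fin (2 * m)} (hv : v.val < m) :
    (univ.filter (· ≠ v)).image (coloring m v) = Ico m (2 * m) := by
  ext k
  simp only [mem_image, mem_filter, mem_univ, true_and, mem_Ico]
  constructor
  · rintro ⟨u, -, rfl⟩
    rw [coloring_of_val_lt_left u hv]
    omega
  · rintro ⟨hmk, hk⟩
    refine ⟨⟨k, hk⟩, fun h => ?_, ?_⟩
    · rw [← h] at hv
      exact absurd hv (by simpa using hmk.not_gt)
    · rw [coloring_of_val_lt_left _ hv]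
      simpa using hmk

theorem image_coloring_of_le_val {v : Fin (2 * m)} (hv : m ≤ v.val) :
    (univ.filter (· ≠ v)).image (coloring m v) =
      insert v.val (((Ico m (2 * m)).erase v).image (v.val + ·)) := by
  ext k
  simp only [mem_image, mem_filter, mem_univ, true_and, mem_insert, mem_erase, mem_Ico]
  constructor
  · rintro ⟨u, hu, rfl⟩
    unfold coloring
    by_cases hum : u.val < m
    · simp [hum, hv.not_gt]
    · exact Or.inr ⟨u, ⟨Fin.val_ne_of_ne hu, by omega, u.isLt⟩, by simp [hum, hv.not_gt]⟩
  · rintro (rfl | ⟨k, ⟨hkv, hmk, hk⟩, rfl⟩)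
    · exact ⟨⟨0, by omega⟩, fun h => by simp [← h] at hv; omega, by
        rw [coloring_comm, coloring_of_val_lt_left _ (show 0 < m by omega)]; omega⟩
    · refine ⟨⟨k, hk⟩, fun h => hkv (by simp [← h]), ?_⟩
      unfold coloring
      simp [hv.not_gt, hmk.not_gt]

theorem card_image_coloring (v : Fin (2 * m)) :
    ((univ.filter (· ≠ v)).image (coloring m v)).card = m := by
  rcases lt_or_ge v.val m with hv | hv
  · rw [image_coloring_of_val_lt hv, Nat.card_Ico]
    omega
  · have hvB : v.val ∈ Ico m (2 * m) := mem_Ico.2 ⟨hv, v.isLt⟩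
    have hvnot : v.val ∉ ((Ico m (2 * m)).erase v).image (v.val + ·) := by
      simp only [mem_image, mem_erase, mem_Ico]
      omega
    rw [image_coloring_of_le_val hv, card_insert_of_notMem hvnot,
      card_image_of_injective _ (add_right_injective _), card_erase_of_mem hvB, Nat.card_Ico]
    omega

theorem not_isPCCycle (w : ℕ → Fin (2 * m)) : ¬ IsPCCycle (2 * m) (coloring m) (2 * m) w := by
  intro h
  have hm : 3 ≤ 2 * m := h.1
  have : NeZero (2 * m) := ⟨by omega⟩
  have hw : Function.Bijective (fun i : Fin (2 * m) => w i) :=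
    Finite.injective_iff_bijective.1 h.injective
  have hnot_both : ∀ i : Fin (2 * m), ¬ ((w ↑(i - 1)).val < m ∧ (w ↑(i + 1)).val < m) :=
    fun i ⟨hprev, hnext⟩ => h.color_ne i <| by
      rw [coloring_of_val_lt_left _ hprev, coloring_of_val_lt_right _ hnext]
  have hcard : 2 * #{i : Fin (2 * m) | (w i).val < m} = 2 * m := by
    rw [card_filter, hw.sum_comp (fun x => if x.val < m then 1 else 0), ← card_filter,
      Fin.card_filter_val_lt]
    omega
  have hnbr := Fin.sub_one_or_add_one_of_two_mul_card_filter_eq _ hnot_both hcard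
  have hlow_nbrs : ∀ j : Fin (2 * m), (w j).val < m →
      (w ↑(j - 1)).val ≤ m → (w ↑(j + 1)).val ≤ m → False := fun j hj hprev hnext =>
    h.color_ne j <| by
      rw [coloring_of_val_lt_right _ hj, coloring_of_val_lt_left _ hj]
      omega
  obtain ⟨i, hi⟩ := hw.2 ⟨m, by omega⟩
  have him : (w i).val = m := by simp [hi]
  rcases hnbr i with hprev | hnext
  · have hprev' := hnbr (i - 1)
    rw [sub_add_cancel] at hprev'
    exact hlow_nbrs (i - 1) hprev (by omega) (by rw [sub_add_cancel]; omega)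
  · have hnext' := hnbr (i + 1)
    rw [add_sub_cancel_right] at hnext'
    exact hlow_nbrs (i + 1) hnext (by rw [add_sub_cancel_right]; omega) (by omega)

end FujitaMagnant

theorem fujita_magnant_general (m : ℕ) :
    ∃ c : Fin (2 * m) → Fin (2 * m) → ℕ, (∀ u v, c u v = c v u) ∧
      (∀ v : Fin (2 * m),
        ((Finset.univ.filter (fun u => u ≠ v)).image (fun u => c v u)).card = m) ∧
      ¬ ∃ w : ℕ → Fin (2 * m), IsPCCycle (2 * m) c (2 * m) w :=
  ⟨FujitaMagnant.coloring m, FujitaMagnant.coloring_comm, FujitaMagnant.card_image_coloring,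
    fun ⟨w, hw⟩ => FujitaMagnant.not_isPCCycle w hw⟩

/-- **Fujita–Magnant construction.** For every `m ≥ 2` there is an edge coloring of
`K_{2m}` in which every vertex has color degree exactly `m`, but which has no
properly colored Hamiltonian cycle. -/
theorem fujita_magnant (m : ℕ) (hm : 2 ≤ m) :
    ∃ c : Fin (2 * m) → Fin (2 * m) → ℕ, (∀ u v, c u v = c v u) ∧
      (∀ v : Fin (2 * m),
        ((Finset.univ.filter (fun u => u ≠ v)).image (fun u => c v u)).card = m) ∧
      ¬ ∃ w : ℕ → Fin (2 * m), IsPCCycle (2 * m) c (2 * m) w :=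
  fujita_magnant_general m
end
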